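/- Let β_{ij} (i ≠ j) be smooth solutions of the Lamé equations on ℝ^N, and let ξ_i : ℝ^N → ℝ^M, ζ_i : ℝ^N → ℝ^P be smooth solutions of ∂ξ_j/∂u_i = β_{ji} ξ_i and ∂ζ_j/∂u_i = β_{ji} ζ_i (i ≠ j). Define ξ*_i := (∂ξ_i/∂u_i + Σ_{k≠i} ξ_k β_{ki})ᵀ and ζ*_i := (∂ζ_i/∂u_i + Σ_{k≠i} ζ_k β_{ki})ᵀ, and let Ω(ξ,ζ*) and Ω(ζ,ξ*) be matrix-valued potentials satisfying ∂Ω(ξ,ζ*)/∂u_i = ξ_i ⊗ ζ*_i and ∂Ω(ζ,ξ*)/∂u_i = ζ_i ⊗ ξ*_i for all i. Then for every i, ∂/∂u_i ( Ω(ξ,ζ*) + Ω(ζ,ξ*)ᵀ − Σ_{k=1}^N ξ_k ⊗ ζ_kᵀ ) = 0. -/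

import Mathlib

open scoped BigOperators

/-- Partial derivative of a scalar function on `ℝ^N` in the `i`-th coordinate direction. -/
noncomputable def pd {N : ℕ} (i : Fin N) (f : (Fin N → ℝ) → ℝ) (u : Fin N → ℝ) : ℝ :=
  fderiv ℝ f u (Pi.single i 1)


lemma pd_add {N : ℕ} (i : Fin N) {f g : (Fin N → ℝ) → ℝ} {u : Fin N → ℝ}
    (hf : DifferentiableAt ℝ f u) (hg : DifferentiableAt ℝ g u) :
    pd i (fun v => f v + g v) u = pd i f u + pd i g u := by
  simp [pd, fderiv_fun_add hf hg]

lemma pd_sub {N : ℕ} (i : Fin N) {f g : (Fin N → ℝ) → ℝ} {u : Fin N → ℝ}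
    (hf : DifferentiableAt ℝ f u) (hg : DifferentiableAt ℝ g u) :
    pd i (fun v => f v - g v) u = pd i f u - pd i g u := by
  simp [pd, fderiv_fun_sub hf hg]

lemma pd_mul {N : ℕ} (i : Fin N) {f g : (Fin N → ℝ) → ℝ} {u : Fin N → ℝ}
    (hf : DifferentiableAt ℝ f u) (hg : DifferentiableAt ℝ g u) :
    pd i (fun v => f v * g v) u = pd i f u * g u + f u * pd i g u := by
  simp [pd, fderiv_fun_mul hf hg]; ring

lemma pd_sum {N : ℕ} (i : Fin N) {α : Type*} (s : Finset α)
    {f : α → (Fin N → ℝ) → ℝ} {u : Fin N → ℝ}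
    (hf : ∀ k ∈ s, DifferentiableAt ℝ (f k) u) :
    pd i (fun v => ∑ k ∈ s, f k v) u = ∑ k ∈ s, pd i (f k) u := by
  simp only [pd]
  rw [fderiv_fun_sum hf]
  simp

theorem potential_symmetry_constant
    {N M P : ℕ}
    (β : Fin N → Fin N → (Fin N → ℝ) → ℝ)
    (ξ : Fin N → (Fin N → ℝ) → Fin M → ℝ)
    (ζ : Fin N → (Fin N → ℝ) → Fin P → ℝ)
    (ξs : Fin N → (Fin N → ℝ) → Fin M → ℝ)
    (ζs : Fin N → (Fin N → ℝ) → Fin P → ℝ)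
    (Ωξζ : (Fin N → ℝ) → Fin M → Fin P → ℝ)
    (Ωζξ : (Fin N → ℝ) → Fin P → Fin M → ℝ)
    (hβ : ∀ i j, i ≠ j → ContDiff ℝ (⊤ : ℕ∞) (β i j))
    (hξ : ∀ i a, ContDiff ℝ (⊤ : ℕ∞) (fun u => ξ i u a))
    (hζ : ∀ i b, ContDiff ℝ (⊤ : ℕ∞) (fun u => ζ i u b))
    -- Lamé equations
    (hLame1 : ∀ i j k, i ≠ j → j ≠ k → i ≠ k → ∀ u : Fin N → ℝ,
      pd k (β i j) u = β i k u * β k j u)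
    (hLame2 : ∀ i j, i ≠ j → ∀ u : Fin N → ℝ,
      pd i (β i j) u + pd j (β j i) u
        + ∑ k ∈ Finset.univ.filter (fun k => k ≠ i ∧ k ≠ j), β k i u * β k j u = 0)
    -- direct systems
    (hdirectξ : ∀ i j, i ≠ j → ∀ (u : Fin N → ℝ) (a : Fin M),
      pd i (fun v => ξ j v a) u = β j i u * ξ i u a)
    (hdirectζ : ∀ i j, i ≠ j → ∀ (u : Fin N → ℝ) (b : Fin P),
      pd i (fun v => ζ j v b) u = β j i u * ζ i u b)
    -- Ribaucour prescription for the adjoints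
    (hξs : ∀ i (u : Fin N → ℝ) (a : Fin M),
      ξs i u a = pd i (fun v => ξ i v a) u
        + ∑ k ∈ Finset.univ.filter (fun k => k ≠ i), ξ k u a * β k i u)
    (hζs : ∀ i (u : Fin N → ℝ) (b : Fin P),
      ζs i u b = pd i (fun v => ζ i v b) u
        + ∑ k ∈ Finset.univ.filter (fun k => k ≠ i), ζ k u b * β k i u)
    -- potentials
    (hΩξζ : ∀ i (u : Fin N → ℝ) (a : Fin M) (b : Fin P),
      pd i (fun v => Ωξζ v a b) u = ξ i u a * ζs i u b)
    (hΩζξ : ∀ i (u : Fin N → ℝ) (b : Fin P) (a : Fin M),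
      pd i (fun v => Ωζξ v b a) u = ζ i u b * ξs i u a)
    (hΩξζsm : ∀ a b, ContDiff ℝ (⊤ : ℕ∞) (fun u => Ωξζ u a b))
    (hΩζξsm : ∀ b a, ContDiff ℝ (⊤ : ℕ∞) (fun u => Ωζξ u b a)) :
    ∀ (i : Fin N) (u : Fin N → ℝ) (a : Fin M) (b : Fin P),
      pd i (fun v => Ωξζ v a b + Ωζξ v b a - ∑ k, ξ k v a * ζ k v b) u = 0 := by
  intro i u a b
  have dξ : ∀ k, DifferentiableAt ℝ (fun v => ξ k v a) u :=
    fun k => ((hξ k a).differentiable (by simp)).differentiableAt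
  have dζ : ∀ k, DifferentiableAt ℝ (fun v => ζ k v b) u :=
    fun k => ((hζ k b).differentiable (by simp)).differentiableAt
  have dsum : DifferentiableAt ℝ (fun v => ∑ k, ξ k v a * ζ k v b) u := by
    apply DifferentiableAt.fun_sum
    intro k _
    exact (dξ k).mul (dζ k)
  have dA : DifferentiableAt ℝ (fun v => Ωξζ v a b) u :=
    ((hΩξζsm a b).differentiable (by simp)).differentiableAt
  have dB : DifferentiableAt ℝ (fun v => Ωζξ v b a) u :=
    ((hΩζξsm b a).differentiable (by simp)).differentiableAt
  rw [pd_sub i (dA.fun_add dB) dsum, pd_add i dA dB,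
    pd_sum i Finset.univ (fun k _ => (dξ k).fun_mul (dζ k)),
    hΩξζ i u a b, hΩζξ i u b a]
  have hsplit : ∀ f : Fin N → ℝ, ∑ k, f k
      = f i + ∑ k ∈ Finset.univ.filter (fun k => k ≠ i), f k := by
    intro f
    rw [← Finset.sum_filter_add_sum_filter_not Finset.univ (fun k => k = i) f]
    congr 1
    rw [Finset.filter_eq']
    simp
  rw [hsplit (fun k => pd i (fun v => ξ k v a * ζ k v b) u)]
  have hterm : ∀ k ∈ Finset.univ.filter (fun k => k ≠ i),
      pd i (fun v => ξ k v a * ζ k v b) u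
        = β k i u * ξ i u a * ζ k u b + ξ k u a * (β k i u * ζ i u b) := by
    intro k hk
    simp only [Finset.mem_filter] at hk
    rw [pd_mul i (dξ k) (dζ k), hdirectξ i k (fun h => hk.2 h.symm) u a,
      hdirectζ i k (fun h => hk.2 h.symm) u b]
  rw [Finset.sum_congr rfl hterm, pd_mul i (dξ i) (dζ i), hξs i u a, hζs i u b]
  simp only [Finset.sum_add_distrib, add_mul, mul_add, Finset.mul_sum, Finset.sum_mul]
  have h1 : ∑ k ∈ Finset.univ.filter (fun k => k ≠ i), β k i u * ξ i u a * ζ k u b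
      = ∑ k ∈ Finset.univ.filter (fun k => k ≠ i), ξ i u a * ζ k u b * β k i u :=
    Finset.sum_congr rfl (fun k _ => by ring)
  have h2 : ∑ k ∈ Finset.univ.filter (fun k => k ≠ i), ξ k u a * (β k i u * ζ i u b)
      = ∑ k ∈ Finset.univ.filter (fun k => k ≠ i), ζ i u b * ξ k u a * β k i u :=
    Finset.sum_congr rfl (fun k _ => by ring)
  have h3 : ∑ k ∈ Finset.univ.filter (fun k => k ≠ i), ζ i u b * (ξ k u a * β k i u)
      = ∑ k ∈ Finset.univ.filter (fun k => k ≠ i), ζ i u b * ξ k u a * β k i u :=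
    Finset.sum_congr rfl (fun k _ => (mul_assoc _ _ _).symm)
  have h4 : ζ i u b * pd i (fun v => ξ i v a) u = pd i (fun v => ξ i v a) u * ζ i u b :=
    mul_comm _ _
  have h5 : ∑ k ∈ Finset.univ.filter (fun k => k ≠ i), ξ i u a * (ζ k u b * β k i u)
      = ∑ k ∈ Finset.univ.filter (fun k => k ≠ i), ξ i u a * ζ k u b * β k i u :=
    Finset.sum_congr rfl (fun k _ => (mul_assoc _ _ _).symm)
  rw [h1, h2, h3, h4, h5]
  abel
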